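/- Appendix operator identity I: For every smooth function v : ℝ → ℝ, setting (L̃v)(x) = (α·v')'(x) + b(b+1)·α(x)·v(x), one has for all x ∈ ℝ: b·Q(x)·(L̃v)'(x) + (b−1)·Q'(x)·(L̃v)(x) = −b·[ (Q^{−1/b−1}·v)'(x) − (Q^{−1/b−1}·v)'''(x) ] + ((b³−b²)/(2k))·v'(x). -/

import Mathlib

open Real MeasureTheory Filter

noncomputable section

/-- `ν = -(b+1)/2`. -/
def nuP (b : ℝ) : ℝ := -(b + 1) / 2

/-- The lefton momentum profile `Q(x) = (A(1-b)/2) (cosh(νx))^{b/ν}`. -/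
def Qp (b A : ℝ) (x : ℝ) : ℝ :=
  A * (1 - b) / 2 * Real.cosh (nuP b * x) ^ (b / nuP b)

/-- The lefton velocity profile `q(x) = A (cosh(νx))^{-1/ν}`. -/
def qp (b A : ℝ) (x : ℝ) : ℝ := A * Real.cosh (nuP b * x) ^ (-1 / nuP b)

/-- `k = (A(1-b)/2)^{1/b+1}`. -/
def kP (b A : ℝ) : ℝ := (A * (1 - b) / 2) ^ (1 / b + 1)

/-- The weight `α(x) = Q(x)^{-1/b-2}`. -/
def alphaP (b A : ℝ) (x : ℝ) : ℝ := Qp b A x ^ (-1 / b - 2)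

/-- `SQ(x) = (2k(1-b)/b) Q^{-1/b} + (2(b-1)/b) Q`. -/
def SQp (b A : ℝ) (x : ℝ) : ℝ :=
  2 * kP b A * (1 - b) / b * Qp b A x ^ (-1 / b) + 2 * (b - 1) / b * Qp b A x

/-- The Pöschl–Teller potential `H̃₀(x) = 1/4 - (b(1+2b)/4) sech²(νx)`. -/
def Htilde0 (b : ℝ) (x : ℝ) : ℝ :=
  1 / 4 - b * (1 + 2 * b) / 4 * (1 / Real.cosh (nuP b * x)) ^ 2

/-- The Schrödinger operator `(Hg)(x) = (2k/b²)(−g'' + H̃₀ g)`. -/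
def Hop (b A : ℝ) (g : ℝ → ℝ) (x : ℝ) : ℝ :=
  2 * kP b A / b ^ 2 * (-(deriv (deriv g) x) + Htilde0 b x * g x)

/-- The linearized operator `(𝓛f)(x) = k(−((2α/b²) f')' − (2(b+1)/b) α f)`. -/
def Lop (b A : ℝ) (f : ℝ → ℝ) (x : ℝ) : ℝ :=
  kP b A * (-(deriv (fun y => 2 * alphaP b A y / b ^ 2 * deriv f y) x)
    - 2 * (b + 1) / b * alphaP b A x * f x)

/-- The integrand of the conserved functional `F₂`. -/
def F2Integrand (b : ℝ) (f : ℝ → ℝ) (x : ℝ) : ℝ :=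
  f x ^ (-1 / b) * ((deriv f x) ^ 2 / (b ^ 2 * f x ^ 2) + 1)

/-- The squared weighted norm `‖f‖²_{H¹_α} = ∫ (f² + f'²) α`. -/
def HalphaSq (b A : ℝ) (f : ℝ → ℝ) : ℝ :=
  ∫ x, (f x ^ 2 + deriv f x ^ 2) * alphaP b A x

/-- The `𝒵`-norm `‖f‖_𝒵 = ‖f‖_{H¹_α} + sup_x |f(x)|/Q(x)`. -/
def ZNorm (b A : ℝ) (f : ℝ → ℝ) : ℝ :=
  Real.sqrt (HalphaSq b A f) + ⨆ x : ℝ, |f x| / Qp b A x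

/-- `m : ℝ → ℝ → ℝ` (time then space) solves the b-family equation in momentum form,
with velocity `u` satisfying `m = u - u_xx` and `m_t + u m_x + b u_x m = 0`. -/
def IsBFamilySolution (b : ℝ) (m u : ℝ → ℝ → ℝ) : Prop :=
  (∀ t x, m t x = u t x - deriv (deriv (u t)) x) ∧
  ∀ t x, deriv (fun s => m s x) t + u t x * deriv (m t) x + b * deriv (u t) x * m t x = 0

/-- `(v, h)` solves the linearization of the b-family equation around the lefton:
`h - h_xx = v` and `v_t = ∂_x(q h_xx + (b-1) q' h_x - (b+1) q h + q'' h)`. -/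
def IsLinearizedSolution (b A : ℝ) (v h : ℝ → ℝ → ℝ) : Prop :=
  (∀ t x, h t x - deriv (deriv (h t)) x = v t x) ∧
  ∀ t x, deriv (fun s => v s x) t =
    deriv (fun y => qp b A y * deriv (deriv (h t)) y
      + (b - 1) * deriv (qp b A) y * deriv (h t) y
      - (b + 1) * qp b A y * h t y + deriv (deriv (qp b A)) y * h t y) x

/-- The quadratic form `(𝓛η, η) = (2k/b²)∫ η'² α − (2k(b+1)/b)∫ η² α`. -/
def quadFormL (b A : ℝ) (η : ℝ → ℝ) : ℝ :=
  2 * kP b A / b ^ 2 * (∫ x, deriv η x ^ 2 * alphaP b A x)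
    - 2 * kP b A * (b + 1) / b * (∫ x, η x ^ 2 * alphaP b A x)

/-- The monotonicity weight `ψ_L(x) = (2/π) arctan(exp(νx/L))` with `L = 3 - b`. -/
def psiL (b : ℝ) (x : ℝ) : ℝ :=
  2 / Real.pi * Real.arctan (Real.exp (nuP b * x / (3 - b)))

/-! With `T = tanh (ν x)`, the profiles `Q`, `α` and `W = Q^{-1/b-1} = Q α` are constant
multiples of powers of `cosh (ν x)`, so their logarithmic derivatives are `b T`, `-(1 + 2b) T`
and `-(b + 1) T`, while `T' = ν (1 - T²)`. Expanding both sides with these rules writes each as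
`W` times a polynomial in `T, v, v', v'', v'''`; the two polynomials agree modulo the single
relation `W (1 - T²) = cosh² (ν x) (1 - tanh² (ν x)) / k = 1 / k`. -/

theorem Real.hasDerivAt_tanh (x : ℝ) : HasDerivAt tanh (1 - tanh x ^ 2) x := by
  have h := (hasDerivAt_sinh x).div (hasDerivAt_cosh x) (cosh_pos x).ne'
  rw [show tanh = sinh / cosh from funext tanh_eq_sinh_div_cosh]
  refine h.congr_deriv ?_
  rw [Pi.div_apply]
  field_simp

theorem Real.cosh_sq_mul_one_sub_tanh_sq (x : ℝ) : cosh x ^ 2 * (1 - tanh x ^ 2) = 1 := by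
  rw [tanh_eq_sinh_div_cosh]
  field_simp [(cosh_pos x).ne']
  linear_combination cosh_sq_sub_sinh_sq x

theorem hasDerivAt_cosh_mul (ν x : ℝ) :
    HasDerivAt (fun y => cosh (ν * y)) (ν * tanh (ν * x) * cosh (ν * x)) x := by
  refine ((hasDerivAt_id' x).const_mul ν).cosh.congr_deriv ?_
  rw [tanh_eq_sinh_div_cosh]
  field_simp [(cosh_pos (ν * x)).ne']

theorem hasDerivAt_tanh_mul (ν x : ℝ) :
    HasDerivAt (fun y => tanh (ν * y)) (ν * (1 - tanh (ν * x) ^ 2)) x :=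
  ((Real.hasDerivAt_tanh _).comp x ((hasDerivAt_id' x).const_mul ν)).congr_deriv (by ring)

theorem HasDerivAt.rpow_const_of_logDeriv {f : ℝ → ℝ} {g x : ℝ} (hf : HasDerivAt f (g * f x) x)
    (hx : 0 < f x) (p : ℝ) : HasDerivAt (fun y => f y ^ p) (p * g * f x ^ p) x := by
  refine (hf.rpow_const (p := p) (Or.inl hx.ne')).congr_deriv ?_
  rw [rpow_sub_one hx.ne']
  field_simp

theorem HasDerivAt.mul_of_logDeriv {W f : ℝ → ℝ} {g f' x : ℝ} (hW : HasDerivAt W (g * W x) x)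
    (hf : HasDerivAt f f' x) : HasDerivAt (fun y => W y * f y) (W x * (f' + g * f x)) x :=
  (hW.mul hf).congr_deriv (by ring)

theorem ContDiff.hasDerivAt_derivs_of_three {v : ℝ → ℝ} (hv : ContDiff ℝ 3 v) (y : ℝ) :
    HasDerivAt v (deriv v y) y ∧ HasDerivAt (deriv v) (deriv (deriv v) y) y ∧
      HasDerivAt (deriv (deriv v)) (deriv (deriv (deriv v)) y) y := by
  have h1 : ContDiff ℝ 2 (deriv v) := hv.deriv'
  have h2 : ContDiff ℝ 1 (deriv (deriv v)) := h1.deriv'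
  exact ⟨(hv.differentiable (by norm_num) y).hasDerivAt,
    (h1.differentiable (by norm_num) y).hasDerivAt, (h2.differentiable (by norm_num) y).hasDerivAt⟩

section LogDerivIdentity

variable {b : ℝ} {T Q α W v : ℝ → ℝ}

theorem weighted_operator_lhs_eq (hT : ∀ y, HasDerivAt T (nuP b * (1 - T y ^ 2)) y)
    {x : ℝ} (hQ : HasDerivAt Q (b * T x * Q x) x)
    (hα : ∀ y, HasDerivAt α ((-1 - 2 * b) * T y * α y) y) (hv : ContDiff ℝ 3 v) :
    b * Q x * deriv (fun y => deriv (fun z => α z * deriv v z) y + b * (b + 1) * α y * v y) x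
        + (b - 1) * deriv Q x * (deriv (fun z => α z * deriv v z) x + b * (b + 1) * α x * v x)
      = b * (Q x * α x) * (deriv (deriv (deriv v)) x
          + (-1 - 2 * b) * (nuP b * (1 - T x ^ 2) * deriv v x + T x * deriv (deriv v) x)
          + b * (b + 1) * deriv v x
          - (b + 2) * T x * (deriv (deriv v) x + (-1 - 2 * b) * T x * deriv v x
            + b * (b + 1) * v x)) := by
  have hv' := hv.hasDerivAt_derivs_of_three
  have hαv : deriv (fun z => α z * deriv v z)
      = fun y => α y * (deriv (deriv v) y + (-1 - 2 * b) * T y * deriv v y) :=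
    funext fun y => ((hα y).mul_of_logDeriv (hv' y).2.1).deriv
  have hL : (fun y => deriv (fun z => α z * deriv v z) y + b * (b + 1) * α y * v y)
      = fun y => α y * (deriv (deriv v) y + (-1 - 2 * b) * (T y * deriv v y)
          + b * (b + 1) * v y) := by
    funext y; rw [hαv]; ring
  have hg : HasDerivAt (fun y => deriv (deriv v) y + (-1 - 2 * b) * (T y * deriv v y)
      + b * (b + 1) * v y) _ x :=
    ((hv' x).2.2.add (((hT x).mul (hv' x).2.1).const_mul _)).add ((hv' x).1.const_mul _)
  rw [hL, ((hα x).mul_of_logDeriv hg).deriv, hαv, hQ.deriv]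
  ring

theorem weighted_operator_identity (hT : ∀ y, HasDerivAt T (nuP b * (1 - T y ^ 2)) y)
    {x κ : ℝ} (hQ : HasDerivAt Q (b * T x * Q x) x)
    (hα : ∀ y, HasDerivAt α ((-1 - 2 * b) * T y * α y) y)
    (hW : ∀ y, HasDerivAt W (-(b + 1) * T y * W y) y) (hQα : Q x * α x = W x)
    (hκ : W x * (1 - T x ^ 2) = κ⁻¹) (hv : ContDiff ℝ 3 v) :
    b * Q x * deriv (fun y => deriv (fun z => α z * deriv v z) y + b * (b + 1) * α y * v y) x
        + (b - 1) * deriv Q x * (deriv (fun z => α z * deriv v z) x + b * (b + 1) * α x * v x)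
      = -b * (deriv (fun y => W y * v y) x - deriv (deriv (deriv (fun y => W y * v y))) x)
        + (b ^ 3 - b ^ 2) / (2 * κ) * deriv v x := by
  have hv' := hv.hasDerivAt_derivs_of_three
  have hWv : deriv (fun y => W y * v y) = fun y => W y * (deriv v y + -(b + 1) * T y * v y) :=
    funext fun y => ((hW y).mul_of_logDeriv (hv' y).1).deriv
  have hWv' : deriv (deriv (fun y => W y * v y)) = fun y => W y * (deriv (deriv v) y
      - 2 * (b + 1) * (T y * deriv v y) - (b + 1) * nuP b * ((1 - T y ^ 2) * v y)
      + (b + 1) ^ 2 * (T y ^ 2 * v y)) := by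
    funext y
    rw [hWv]
    refine ((hW y).mul_of_logDeriv
      ((hv' y).2.1.add (((hT y).const_mul _).mul (hv' y).1))).deriv.trans ?_
    simp only [Pi.add_apply, Pi.mul_apply]
    ring
  have hsech2 : HasDerivAt (fun y => 1 - T y ^ 2) (-(2 * T x * (nuP b * (1 - T x ^ 2)))) x := by
    simpa using ((hT x).pow 2).const_sub 1
  have hWv_factor : HasDerivAt (fun y => deriv (deriv v) y
      - 2 * (b + 1) * (T y * deriv v y) - (b + 1) * nuP b * ((1 - T y ^ 2) * v y)
      + (b + 1) ^ 2 * (T y ^ 2 * v y)) _ x :=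
    (((hv' x).2.2.sub (((hT x).mul (hv' x).2.1).const_mul _)).sub
      ((hsech2.mul (hv' x).1).const_mul _)).add ((((hT x).pow 2).mul (hv' x).1).const_mul _)
  rw [weighted_operator_lhs_eq hT hQ hα hv, hWv', ((hW x).mul_of_logDeriv hWv_factor).deriv, hWv,
    hQα]
  simp only [Pi.pow_apply, nuP]
  linear_combination (b ^ 3 - b ^ 2) / 2 * deriv v x * hκ

end LogDerivIdentity

section Lefton

variable {b A : ℝ}

theorem lefton_amplitude_pos (hb : b < 1) (hA : 0 < A) : 0 < A * (1 - b) / 2 := by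
  have : 0 < 1 - b := by linarith
  positivity

theorem Qp_pos (hb : b < 1) (hA : 0 < A) (x : ℝ) : 0 < Qp b A x :=
  mul_pos (lefton_amplitude_pos hb hA) (rpow_pos_of_pos (cosh_pos _) _)

theorem hasDerivAt_Qp (hν : nuP b ≠ 0) (x : ℝ) :
    HasDerivAt (Qp b A) (b * tanh (nuP b * x) * Qp b A x) x := by
  refine (((hasDerivAt_cosh_mul (nuP b) x).rpow_const_of_logDeriv (cosh_pos _)
    (b / nuP b)).const_mul (A * (1 - b) / 2)).congr_deriv ?_
  rw [Qp]
  field_simp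

theorem hasDerivAt_Qp_rpow (hb : b < 1) (hA : 0 < A) (hν : nuP b ≠ 0) (p x : ℝ) :
    HasDerivAt (fun y => Qp b A y ^ p) (p * (b * tanh (nuP b * x)) * Qp b A x ^ p) x :=
  (hasDerivAt_Qp hν x).rpow_const_of_logDeriv (Qp_pos hb hA x) p

theorem Qp_mul_alphaP (hb : b < 1) (hA : 0 < A) (x : ℝ) :
    Qp b A x * alphaP b A x = Qp b A x ^ (-1 / b - 1) := by
  rw [alphaP, show -1 / b - 1 = 1 + (-1 / b - 2) by ring, rpow_add (Qp_pos hb hA x), rpow_one]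

theorem Qp_rpow_neg_inv_sub_one (hb : b < 1) (hA : 0 < A) (hb0 : b ≠ 0) (hν : nuP b ≠ 0)
    (x : ℝ) : Qp b A x ^ (-1 / b - 1) = cosh (nuP b * x) ^ 2 / kP b A := by
  have hc := lefton_amplitude_pos hb hA
  have hexp : b / nuP b * (-1 / b - 1) = 2 := by
    have hb1 : b + 1 ≠ 0 := fun h => hν (by rw [nuP, h]; ring)
    rw [nuP]
    field_simp
    ring
  rw [Qp, mul_rpow hc.le (rpow_nonneg (cosh_pos _).le _), ← rpow_mul (cosh_pos _).le, hexp,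
    rpow_two, show -1 / b - 1 = -(1 / b + 1) by ring, rpow_neg hc.le, kP]
  ring

theorem Qp_rpow_neg_inv_sub_one_mul_one_sub_tanh_sq (hb : b < 1) (hA : 0 < A) (hb0 : b ≠ 0)
    (hν : nuP b ≠ 0) (x : ℝ) :
    Qp b A x ^ (-1 / b - 1) * (1 - tanh (nuP b * x) ^ 2) = (kP b A)⁻¹ := by
  rw [Qp_rpow_neg_inv_sub_one hb hA hb0 hν, div_mul_eq_mul_div, cosh_sq_mul_one_sub_tanh_sq,
    one_div]

end Lefton

/-- **Appendix operator identity I**: for smooth `v`, with `L̃v = (α v')' + b(b+1) α v`,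
`b Q (L̃v)' + (b−1) Q' (L̃v) = −b[(Q^{−1/b−1} v)' − (Q^{−1/b−1} v)'''] + ((b³−b²)/(2k)) v'`. -/
theorem appendix_operator_identity_I (b A : ℝ) (hb : b < -1) (hA : 0 < A)
    (v : ℝ → ℝ) (hv : ContDiff ℝ (⊤ : ℕ∞) v) :
    ∀ x : ℝ,
      b * Qp b A x * deriv (fun y => deriv (fun z => alphaP b A z * deriv v z) y
            + b * (b + 1) * alphaP b A y * v y) x
        + (b - 1) * deriv (Qp b A) x * (deriv (fun z => alphaP b A z * deriv v z) x
            + b * (b + 1) * alphaP b A x * v x)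
      = -b * (deriv (fun y => Qp b A y ^ (-1 / b - 1) * v y) x
            - deriv (deriv (deriv (fun y => Qp b A y ^ (-1 / b - 1) * v y))) x)
        + (b ^ 3 - b ^ 2) / (2 * kP b A) * deriv v x := by
  intro x
  have hb1 : b < 1 := by linarith
  have hb0 : b ≠ 0 := by linarith
  have hν : nuP b ≠ 0 := by unfold nuP; linarith
  have hα (y : ℝ) : HasDerivAt (alphaP b A) ((-1 - 2 * b) * tanh (nuP b * y) * alphaP b A y) y :=
    (hasDerivAt_Qp_rpow hb1 hA hν _ y).congr_deriv (by rw [alphaP]; field_simp)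
  have hW (y : ℝ) : HasDerivAt (fun y => Qp b A y ^ (-1 / b - 1))
      (-(b + 1) * tanh (nuP b * y) * Qp b A y ^ (-1 / b - 1)) y :=
    (hasDerivAt_Qp_rpow hb1 hA hν _ y).congr_deriv (by field_simp; ring)
  exact weighted_operator_identity (fun y => hasDerivAt_tanh_mul _ y) (hasDerivAt_Qp hν x) hα hW
    (Qp_mul_alphaP hb1 hA x) (Qp_rpow_neg_inv_sub_one_mul_one_sub_tanh_sq hb1 hA hb0 hν x)
    (hv.of_le (WithTop.coe_le_coe.mpr le_top))
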